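/- arXiv:1601.07365 — 8 statements merged into one kernel-verified Lean document; each statement's English description precedes it below -/
import Mathlib

section
/- Fix a capacity T ≥ 0, a demand intercept α ≥ 0, a price w ≥ 0, and an opponent total quantity Q_j with 0 ≤ Q_j ≤ α. On the reduced strategy set S = {(t,0) : 0 ≤ t ≤ min{α,T}} ∪ {(T,q) : 0 ≤ q ≤ (α−T)⁺} (the latter part present only when T ≤ α), the payoff u(t,q) = (t+q)·(α − (t+q) − Q_j) − w·q is maximized exactly at: (t*,q*) = (T, (α−w−Q_j)/2 − T) if 0 ≤ Q_j < α − w − 2T; (t*,q*) = (T, 0) if α − w − 2T ≤ Q_j < α − 2T; and (t*,q*) = ((α−Q_j)/2, 0) if α − 2T ≤ Q_j. -/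
/-- On the reduced strategy set
`S = {(t,0) : 0 ≤ t ≤ min{α,T}} ∪ {(T,q) : 0 ≤ q ≤ (α−T)⁺}` (the latter part present only
when `T ≤ α`), the retailer payoff `u(t,q) = (t+q)(α − (t+q) − Qj) − w q` is maximized
exactly at the best reply given by the three cases. -/
theorem stmt1 (T α w Qj : ℝ) (hT : 0 ≤ T) (hα : 0 ≤ α) (hw : 0 ≤ w)
    (hQj0 : 0 ≤ Qj) (hQjα : Qj ≤ α)
    (u : ℝ × ℝ → ℝ)
    (hu : ∀ p : ℝ × ℝ, u p = (p.1 + p.2) * (α - (p.1 + p.2) - Qj) - w * p.2)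
    (S : Set (ℝ × ℝ))
    (hS : S = {p : ℝ × ℝ | p.2 = 0 ∧ 0 ≤ p.1 ∧ p.1 ≤ min α T} ∪
              {p : ℝ × ℝ | T ≤ α ∧ p.1 = T ∧ 0 ≤ p.2 ∧ p.2 ≤ max (α - T) 0}) :
    (Qj < α - w - 2*T →
      ((T, (α - w - Qj)/2 - T) ∈ S ∧
        ∀ p ∈ S, p ≠ (T, (α - w - Qj)/2 - T) → u p < u (T, (α - w - Qj)/2 - T))) ∧
    (α - w - 2*T ≤ Qj → Qj < α - 2*T →
      ((((T : ℝ), (0 : ℝ)) ∈ S) ∧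
        ∀ p ∈ S, p ≠ ((T : ℝ), (0 : ℝ)) → u p < u ((T : ℝ), (0 : ℝ)))) ∧
    (α - 2*T ≤ Qj →
      ((((α - Qj)/2, (0 : ℝ)) ∈ S) ∧
        ∀ p ∈ S, p ≠ (((α - Qj)/2, (0 : ℝ)) : ℝ × ℝ) → u p < u ((α - Qj)/2, (0 : ℝ)))) := by
  subst hS
  refine ⟨?_, ?_, ?_⟩
  · -- Case 1 : Qj < α - w - 2T
    intro h1
    have hq0 : 0 < (α - w - Qj)/2 - T := by linarith
    constructor
    · right
      refine ⟨by linarith, rfl, by linarith, ?_⟩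
      exact le_max_iff.mpr (Or.inl (by linarith))
    · rintro ⟨t, q⟩ (⟨hq, ht0, htm⟩ | ⟨hTα, ht, hq1, hq2⟩) hne
      · -- branch 1 : q = 0, t ≤ min α T
        simp only at hq htm
        subst hq
        have htT : t ≤ T := (le_min_iff.mp htm).2
        simp only [hu]
        nlinarith [mul_nonneg (sub_nonneg.mpr htT)
            (show (0:ℝ) ≤ α - Qj - T - t by linarith)]
      · -- branch 2 : t = T
        simp only at ht hq1 hq2
        rw [ht] at hne ⊢
        rw [ne_eq, Prod.mk.injEq] at hne
        push_neg at hne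
        have hqne : q ≠ (α - w - Qj)/2 - T := hne rfl
        have hpos : 0 < (q - ((α - w - Qj)/2 - T))^2 :=
          (sq_nonneg _).lt_of_ne (Ne.symm (pow_ne_zero 2 (sub_ne_zero.mpr hqne)))
        simp only [hu]
        nlinarith [hpos]
  · -- Case 2 : α - w - 2T ≤ Qj < α - 2T
    intro h1 h2
    constructor
    · left
      exact ⟨rfl, hT, le_min (by linarith) le_rfl⟩
    · rintro ⟨t, q⟩ (⟨hq, ht0, htm⟩ | ⟨hTα, ht, hq1, hq2⟩) hne
      · -- branch 1
        simp only at hq htm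
        subst hq
        have htT : t ≤ T := (le_min_iff.mp htm).2
        rw [ne_eq, Prod.mk.injEq] at hne
        push_neg at hne
        have htlt : t < T := by
          rcases eq_or_lt_of_le htT with h | h
          · exact absurd rfl (hne h)
          · exact h
        simp only [hu]
        nlinarith [mul_pos (sub_pos.mpr htlt)
            (show (0:ℝ) < α - Qj - T - t by linarith)]
      · -- branch 2
        simp only at ht hq1 hq2
        rw [ht] at hne ⊢
        rw [ne_eq, Prod.mk.injEq] at hne
        push_neg at hne
        have hqne : q ≠ 0 := hne rfl
        have hqpos : 0 < q := lt_of_le_of_ne hq1 (Ne.symm hqne)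
        simp only [hu]
        nlinarith [mul_pos hqpos hqpos,
          mul_nonneg hqpos.le (show (0:ℝ) ≤ Qj - (α - w - 2*T) by linarith)]
  · -- Case 3 : α - 2T ≤ Qj
    intro h1
    constructor
    · left
      exact ⟨rfl, by linarith, le_min (by linarith) (by linarith)⟩
    · rintro ⟨t, q⟩ (⟨hq, ht0, htm⟩ | ⟨hTα, ht, hq1, hq2⟩) hne
      · -- branch 1
        simp only at hq htm
        subst hq
        rw [ne_eq, Prod.mk.injEq] at hne
        push_neg at hne
        have htne : t ≠ (α - Qj)/2 := fun h => (hne h) rfl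
        have hpos : 0 < (t - (α - Qj)/2)^2 :=
          (sq_nonneg _).lt_of_ne (Ne.symm (pow_ne_zero 2 (sub_ne_zero.mpr htne)))
        simp only [hu]
        nlinarith [hpos]
      · -- branch 2
        simp only at ht hq1 hq2
        rw [ht] at hne ⊢
        rw [ne_eq, Prod.mk.injEq] at hne
        push_neg at hne
        rcases eq_or_lt_of_le hq1 with hq0 | hq0
        · have hTne : T ≠ (α - Qj)/2 := fun h => (hne h) hq0.symm
          have hpos : 0 < (T - (α - Qj)/2)^2 :=
            (sq_nonneg _).lt_of_ne (Ne.symm (pow_ne_zero 2 (sub_ne_zero.mpr hTne)))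
          simp only [hu]
          nlinarith [hpos, mul_nonneg hw hq1]
        · simp only [hu]
          nlinarith [mul_pos hq0 hq0, mul_nonneg hw hq0.le,
            mul_nonneg hq0.le (show (0:ℝ) ≤ Qj - (α - 2*T) by linarith)]
end

section
/- Let α be a nonnegative random variable with finite expectation whose cumulative distribution function F is continuous (i.e. the induced measure is non-atomic), and let k ∈ ℝ. Then the function r ↦ E[(α − k − r)⁺] is differentiable at every r, with derivative d/dr E[(α − k − r)⁺] = −(1 − F(k + r)). -/
/-!
The integrand `r ↦ (x - k - r)⁺` is 1-Lipschitz, and differentiable with derivative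
`-𝟙{x > k + r}` except at the single point `x = k + r`, which carries no mass. Dominated
differentiation under the integral gives the derivative `-μ(Ioi (k + r)) = -(1 - F(k + r))`.
-/

open MeasureTheory Set

/-- The cumulative distribution function of a distribution `μ` on `ℝ`. -/
noncomputable def cdfR (μ : Measure ℝ) (t : ℝ) : ℝ := (μ (Iic t)).toReal

lemma lipschitzWith_posPart_const_sub (a : ℝ) : LipschitzWith 1 fun s : ℝ => max (a - s) 0 := by
  simpa using ((LipschitzWith.const a).sub LipschitzWith.id).max_const 0

lemma hasDerivAt_posPart_const_sub {a s : ℝ} (h : a ≠ s) :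
    HasDerivAt (fun s' : ℝ => max (a - s') 0) ((Ioi s).indicator (fun _ => -1) a) s := by
  rcases h.lt_or_gt with hlt | hgt
  · rw [indicator_of_notMem (show a ∉ Ioi s from not_lt.2 hlt.le)]
    refine (hasDerivAt_const s 0).congr_of_eventuallyEq ?_
    filter_upwards [eventually_gt_nhds hlt] with s' hs'
    exact max_eq_right (by linarith)
  · rw [indicator_of_mem (show a ∈ Ioi s from hgt)]
    refine ((hasDerivAt_id s).const_sub a).congr_of_eventuallyEq ?_
    filter_upwards [eventually_lt_nhds hgt] with s' hs'
    exact max_eq_left (by linarith)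

lemma hasDerivAt_integral_posPart_sub {μ : Measure ℝ} [IsFiniteMeasure μ]
    (hint : Integrable id μ) {s : ℝ} (hs : μ {s} = 0) :
    HasDerivAt (fun s' => ∫ x, max (x - s') 0 ∂μ) (-μ.real (Ioi s)) s := by
  have hderiv : ∀ᵐ x ∂μ, HasDerivAt (fun s' : ℝ => max (x - s') 0)
      ((Ioi s).indicator (fun _ => -1) x) s := by
    filter_upwards [measure_eq_zero_iff_ae_notMem.1 hs] with x hx
    exact hasDerivAt_posPart_const_sub hx
  have key := hasDerivAt_integral_of_dominated_loc_of_lip (bound := fun _ => (1 : ℝ))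
    Filter.univ_mem
    (.of_forall fun s' => (hint.sub (integrable_const s')).pos_part.aestronglyMeasurable)
    (hint.sub (integrable_const s)).pos_part
    (aestronglyMeasurable_const.indicator measurableSet_Ioi)
    (.of_forall fun x => by simpa using lipschitzWith_posPart_const_sub x)
    (integrable_const 1) hderiv
  simpa [integral_indicator_const _ measurableSet_Ioi] using key.2

lemma one_sub_cdfR {μ : Measure ℝ} [IsProbabilityMeasure μ] (t : ℝ) :
    1 - cdfR μ t = μ.real (Ioi t) := by
  rw [cdfR, ← measureReal_def, ← probReal_compl_eq_one_sub measurableSet_Iic, compl_Iic]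

theorem stmt6_general (μ : Measure ℝ) [IsProbabilityMeasure μ]
    (hint : Integrable id μ)
    (hcont : ∀ t : ℝ, μ {t} = 0) (k : ℝ) :
    ∀ r : ℝ, HasDerivAt (fun r' : ℝ => ∫ x, max (x - k - r') 0 ∂μ)
      (-(1 - cdfR μ (k + r))) r := by
  intro r
  rw [one_sub_cdfR]
  simpa only [sub_sub] using
    (hasDerivAt_integral_posPart_sub hint (hcont (k + r))).comp_const_add k r

/-- For a nonnegative random variable `α` (with distribution `μ`) having
finite expectation and non-atomic (continuous) CDF `F`, and any `k ∈ ℝ`, the function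
`r ↦ E[(α − k − r)⁺]` is differentiable everywhere with derivative `−(1 − F(k + r))`. -/
theorem stmt6 (μ : Measure ℝ) [IsProbabilityMeasure μ]
    (hnonneg : μ (Iio 0) = 0) (hint : Integrable id μ)
    (hcont : ∀ t : ℝ, μ {t} = 0) (k : ℝ) :
    ∀ r : ℝ, HasDerivAt (fun r' : ℝ => ∫ x, max (x - k - r') 0 ∂μ)
      (-(1 - cdfR μ (k + r))) r :=
  stmt6_general μ hint hcont k
end

section
/- Let α be a nonnegative random variable with finite expectation and continuous CDF F, let T ≥ 0, c ≥ 0, k = 3T + c, r_H = α_H − k, and assume r_H > 0. Define the supplier's expected payoff U(r) = (2/3)·r·E[(α − k − r)⁺] for r ≥ 0. If r* maximizes U over [0,∞) and U(r*) > 0, then r* ∈ (0, r_H) and r* satisfies the fixed point equation r* = m(r* + 3T + c). -/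
open MeasureTheory Set

/-- The mean residual lifetime function `m(t) = E[α − t ∣ α > t]` (with value `0` when
`P(α > t) = 0`, using the junk-value convention `x / 0 = 0`). -/
noncomputable def mrl (μ : Measure ℝ) (t : ℝ) : ℝ :=
  (∫ x, max (x - t) 0 ∂μ) / (μ (Ioi t)).toReal

open Filter Topology

/-!
Write `G(t) = E[(α - t)⁺]`. Pointwise, `(x - t)⁺ - h·1{x > t} ≤ (x - t - h)⁺` for every real `h`,
so `-P(α > t)` is a subgradient of `G` at `t`. Comparing the payoff at a maximiser `r > 0` with
the payoff at `r ± h` then gives `|G(k + r) - r·P(α > k + r)| ≤ h·P(α > k + r)` for small `h > 0`,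
hence `G(k + r) = r·P(α > k + r)`, which is the fixed point equation once `P(α > k + r) > 0`.
That probability is positive because `U(r) > 0` forces `G(k + r) > 0`, and this also gives
`k + r < α_H`.
-/

noncomputable def stopLoss (μ : Measure ℝ) (t : ℝ) : ℝ := ∫ x, max (x - t) 0 ∂μ

lemma integrable_max_sub_const_zero {μ : Measure ℝ} [IsFiniteMeasure μ]
    (hint : Integrable id μ) (t : ℝ) : Integrable (fun x => max (x - t) 0) μ :=
  (hint.sub (integrable_const t)).pos_part

lemma max_sub_zero_sub_indicator_le (x t h : ℝ) :
    max (x - t) 0 - h * (Ioi t).indicator 1 x ≤ max (x - (t + h)) 0 := by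
  by_cases hx : t < x
  · simp only [indicator_of_mem (mem_Ioi.mpr hx), Pi.one_apply, mul_one,
      max_eq_left (sub_nonneg.mpr hx.le)]
    linarith [le_max_left (x - (t + h)) 0]
  · simp only [indicator_of_notMem (notMem_Ioi.mpr (not_lt.mp hx)), mul_zero, sub_zero,
      max_eq_right (sub_nonpos.mpr (not_lt.mp hx)), le_max_right]

theorem stopLoss_sub_le {μ : Measure ℝ} [IsFiniteMeasure μ] (hint : Integrable id μ)
    (t h : ℝ) : stopLoss μ t - h * μ.real (Ioi t) ≤ stopLoss μ (t + h) := by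
  have hind : Integrable ((Ioi t).indicator (1 : ℝ → ℝ)) μ :=
    (integrable_const (1 : ℝ)).indicator measurableSet_Ioi
  calc stopLoss μ t - h * μ.real (Ioi t)
      = ∫ x, (max (x - t) 0 - h * (Ioi t).indicator 1 x) ∂μ := by
        rw [integral_sub (integrable_max_sub_const_zero hint t) (hind.const_mul h),
          integral_const_mul, integral_indicator_one measurableSet_Ioi, stopLoss]
    _ ≤ stopLoss μ (t + h) :=
        integral_mono ((integrable_max_sub_const_zero hint t).sub (hind.const_mul h))
          (integrable_max_sub_const_zero hint _) (max_sub_zero_sub_indicator_le · t h)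

lemma stopLoss_eq_zero_of_measure_Ioi_eq_zero {μ : Measure ℝ} {t : ℝ} (h : μ (Ioi t) = 0) :
    stopLoss μ t = 0 := by
  refine integral_eq_zero_of_ae ?_
  filter_upwards [measure_eq_zero_iff_ae_notMem.mp h] with x hx
  exact max_eq_right (sub_nonpos.mpr (not_lt.mp hx))

lemma coe_lt_essSup_of_measure_Ioi_ne_zero {μ : Measure ℝ} {t : ℝ} (h : μ (Ioi t) ≠ 0) :
    (t : EReal) < essSup (fun x : ℝ => (x : EReal)) μ := by
  by_contra! hle
  refine h (measure_eq_zero_iff_ae_notMem.mpr ?_)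
  filter_upwards [ae_le_essSup (f := fun x : ℝ => (x : EReal)) (μ := μ)] with x hx
  exact notMem_Ioi.mpr (EReal.coe_le_coe_iff.mp (hx.trans hle))

theorem eq_mul_of_isMaxOn_mul_of_subgradient {g : ℝ → ℝ} {r s : ℝ} (hr : 0 < r)
    (hsub : ∀ h, g r - h * s ≤ g (r + h)) (hmax : IsMaxOn (fun x => x * g x) (Ici 0) r) :
    g r = r * s := by
  have hbound : ∀ h ∈ Ioc 0 r, |g r - r * s| ≤ h * s := by
    rintro h ⟨hh0, hhr⟩
    have hright : (r + h) * g (r + h) ≤ r * g r := hmax (mem_Ici.mpr (by linarith))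
    have hleft : (r - h) * g (r - h) ≤ r * g r := hmax (mem_Ici.mpr (by linarith))
    have hright' := mul_le_mul_of_nonneg_left (hsub h) (by linarith : 0 ≤ r + h)
    have hleft' := mul_le_mul_of_nonneg_left (hsub (-h)) (by linarith : 0 ≤ r - h)
    rw [← sub_eq_add_neg] at hleft'
    rw [abs_le]
    constructor <;> nlinarith
  have hlim : Tendsto (fun h => h * s) (𝓝[>] 0) (𝓝 0) := by
    simpa using ((tendsto_id (x := 𝓝 (0 : ℝ))).mul_const s).mono_left nhdsWithin_le_nhds
  have hev : ∀ᶠ h in 𝓝[>] (0 : ℝ), |g r - r * s| ≤ h * s := by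
    filter_upwards [Ioc_mem_nhdsGT hr] using hbound
  exact sub_eq_zero.mp (abs_nonpos_iff.mp (ge_of_tendsto hlim hev))

theorem stmt8_general (μ : Measure ℝ) [IsProbabilityMeasure μ]
    (hint : Integrable id μ)
    (T c : ℝ) (k : ℝ) (hk : k = 3*T + c)
    (rH : EReal) (hrH : rH = essSup (fun x : ℝ => (x : EReal)) μ - (k : EReal))
    (U : ℝ → ℝ) (hU : ∀ r : ℝ, U r = (2/3) * r * ∫ x, max (x - k - r) 0 ∂μ)
    (rstar : ℝ) (hr0 : 0 ≤ rstar) (hmax : ∀ r : ℝ, 0 ≤ r → U r ≤ U rstar)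
    (hpos : 0 < U rstar) :
    (0 < rstar ∧ (rstar : EReal) < rH) ∧ rstar = mrl μ (rstar + (3*T + c)) := by
  subst hrH
  rw [← hk]
  have hU' : ∀ r, U r = (2/3) * (r * stopLoss μ (r + k)) := fun r => by
    simp only [hU, stopLoss, sub_sub, add_comm k, mul_assoc]
  have hprod : 0 < rstar * stopLoss μ (rstar + k) := by rw [hU'] at hpos; linarith
  have hrpos : 0 < rstar := lt_of_le_of_ne hr0 (by rintro rfl; simp at hprod)
  have hG : 0 < stopLoss μ (rstar + k) := pos_of_mul_pos_right hprod hr0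
  have hμ : μ (Ioi (rstar + k)) ≠ 0 := fun h => hG.ne' (stopLoss_eq_zero_of_measure_Ioi_eq_zero h)
  have hfix : stopLoss μ (rstar + k) = rstar * μ.real (Ioi (rstar + k)) :=
    eq_mul_of_isMaxOn_mul_of_subgradient (g := fun r => stopLoss μ (r + k)) hrpos
      (fun h => by simpa only [add_right_comm] using stopLoss_sub_le hint (rstar + k) h)
      (fun r hr => by
        show r * stopLoss μ (r + k) ≤ rstar * stopLoss μ (rstar + k)
        have := hmax r hr
        rw [hU', hU'] at this
        linarith)
  refine ⟨⟨hrpos, ?_⟩, ?_⟩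
  · rw [EReal.lt_sub_iff_add_lt (Or.inl (EReal.coe_ne_bot k)) (Or.inl (EReal.coe_ne_top k))]
    exact_mod_cast coe_lt_essSup_of_measure_Ioi_ne_zero hμ
  · have hs : 0 < μ.real (Ioi (rstar + k)) :=
      ENNReal.toReal_pos hμ (measure_ne_top μ _)
    rw [mrl, ← measureReal_def, ← stopLoss, hfix, mul_div_cancel_right₀ _ hs.ne']

/-- If `r*` maximizes the supplier's expected payoff
`U(r) = (2/3)·r·E[(α − k − r)⁺]` over `[0,∞)` with `U(r*) > 0`, then `r* ∈ (0, r_H)` and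
`r*` satisfies the fixed point equation `r* = m(r* + 3T + c)`. -/
theorem stmt8 (μ : Measure ℝ) [IsProbabilityMeasure μ]
    (hnonneg : μ (Iio 0) = 0) (hint : Integrable id μ) (hcont : ∀ t : ℝ, μ {t} = 0)
    (T c : ℝ) (hT : 0 ≤ T) (hc : 0 ≤ c) (k : ℝ) (hk : k = 3*T + c)
    (rH : EReal) (hrH : rH = essSup (fun x : ℝ => (x : EReal)) μ - (k : EReal))
    (hrHpos : 0 < rH)
    (U : ℝ → ℝ) (hU : ∀ r : ℝ, U r = (2/3) * r * ∫ x, max (x - k - r) 0 ∂μ)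
    (rstar : ℝ) (hr0 : 0 ≤ rstar) (hmax : ∀ r : ℝ, 0 ≤ r → U r ≤ U rstar)
    (hpos : 0 < U rstar) :
    (0 < rstar ∧ (rstar : EReal) < rH) ∧ rstar = mrl μ (rstar + (3*T + c)) :=
  stmt8_general μ hint T c k hk rH hrH U hU rstar hr0 hmax hpos
end

section
/- Let α be a nonnegative random variable with finite expectation and continuous CDF F which is DMRL, let T ≥ 0, c ≥ 0, k = 3T + c, r_L = α_L − k, r_H = α_H − k, and assume r_H > 0. If r_L > 0 and E(α) − α_L ≤ α_L − 3T − c (= r_L), then the unique solution r* ∈ (0, r_H) of the fixed point equation r = m(k + r) is given explicitly by r* = (1/2)(E(α) − 3T − c). -/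
open MeasureTheory Set

/- Below the essential infimum `α_L` no mass has been lost, so `m(t) = E(α) - t` there. The
condition `E(α) - α_L ≤ r_L` says exactly that `r* = (E(α) - k) / 2` has `k + r* ≤ α_L`, hence
`m(k + r*) = E(α) - k - r* = r*`; and `r* < E(α) - k ≤ r_H`. Uniqueness: `r` is strictly increasing
while a DMRL `r ↦ m(k + r)` is non-increasing. -/

lemma ae_le_of_essInf_coe_eq {μ : Measure ℝ} {a : ℝ}
    (h : essInf (fun x : ℝ => (x : EReal)) μ = a) : ∀ᵐ x ∂μ, a ≤ x := by
  filter_upwards [h ▸ ae_essInf_le (f := fun x : ℝ => (x : EReal)) (μ := μ)] with x hx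
  exact_mod_cast hx

lemma coe_integral_le_essSup {α : Type*} [MeasurableSpace α] {μ : Measure α}
    [IsProbabilityMeasure μ] {f : α → ℝ} (hf : Integrable f μ) :
    ((∫ x, f x ∂μ : ℝ) : EReal) ≤ essSup (fun x => (f x : EReal)) μ := by
  have hle := ae_le_essSup (f := fun x => (f x : EReal)) (μ := μ)
  induction h : essSup (fun x => (f x : EReal)) μ using EReal.rec with
  | bot =>
    rw [h] at hle
    simp only [le_bot_iff, EReal.coe_ne_bot, Filter.eventually_false_iff_eq_bot,
      ae_eq_bot] at hle
    exact absurd hle (IsProbabilityMeasure.ne_zero μ)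
  | top => exact le_top
  | coe b =>
    rw [h] at hle
    have hle' : ∀ᵐ x ∂μ, f x ≤ b := by filter_upwards [hle] with x hx; exact_mod_cast hx
    exact_mod_cast (integral_mono_ae hf (integrable_const b) hle').trans_eq (by simp)

lemma mrl_eq_integral_sub_of_le {μ : Measure ℝ} [IsProbabilityMeasure μ] [NullSingletonClass μ]
    (hint : Integrable id μ) {a t : ℝ} (hae : ∀ᵐ x ∂μ, a ≤ x) (ht : t ≤ a) :
    mrl μ t = (∫ x, x ∂μ) - t := by
  have hIio : μ (Iio a) = 0 := by
    have h := ae_iff.mp hae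
    simp only [not_le] at h
    exact h
  have hIoi : μ (Ioi t) = 1 := by
    rw [← compl_Iic, prob_compl_eq_one_iff measurableSet_Iic]
    exact measure_mono_null (Iic_subset_Iic.mpr ht) (by rwa [measure_congr Iio_ae_eq_Iic.symm])
  have hmax : ∫ x, max (x - t) 0 ∂μ = ∫ x, x - t ∂μ := by
    refine integral_congr_ae ?_
    filter_upwards [hae] with x hx
    exact max_eq_left (by linarith)
  rw [mrl, hmax, integral_sub (f := fun x => x) hint (integrable_const t), hIoi]
  simp

lemma Antitone.eq_of_eq_apply_add {m : ℝ → ℝ} (hm : Antitone m) {k r s : ℝ}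
    (hr : r = m (k + r)) (hs : s = m (k + s)) : r = s := by
  rcases lt_trichotomy r s with h | h | h
  · linarith [hm (add_le_add_right h.le k)]
  · exact h
  · linarith [hm (add_le_add_right h.le k)]

theorem stmt11_general (μ : Measure ℝ) [IsProbabilityMeasure μ]
    (hint : Integrable id μ) (hcont : ∀ t : ℝ, μ {t} = 0)
    (hdmrl : Antitone (mrl μ))
    (T c : ℝ) (k : ℝ) (hk : k = 3*T + c)
    (αL : ℝ) (hαL : essInf (fun x : ℝ => (x : EReal)) μ = (αL : EReal))
    (rH : EReal) (hrH : rH = essSup (fun x : ℝ => (x : EReal)) μ - (k : EReal))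
    (hrLpos : 0 < αL - k)
    (hcond : (∫ x, x ∂μ) - αL ≤ αL - k) :
    ∃ rstar : ℝ, (0 < rstar ∧ (rstar : EReal) < rH) ∧ rstar = mrl μ (k + rstar) ∧
      (∀ r : ℝ, 0 < r → (r : EReal) < rH → r = mrl μ (k + r) → r = rstar) ∧
      rstar = (1/2) * ((∫ x, x ∂μ) - (3*T + c)) := by
  have : NullSingletonClass μ := ⟨hcont⟩
  set E := ∫ x, x ∂μ
  have hae := ae_le_of_essInf_coe_eq hαL
  have hαL_le_E : αL ≤ E := by simpa using integral_mono_ae (integrable_const αL) hint hae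
  have hfix : (1/2) * (E - k) = mrl μ (k + (1/2) * (E - k)) := by
    rw [mrl_eq_integral_sub_of_le hint hae (by linarith)]
    ring
  have hlt : (((1/2) * (E - k) : ℝ) : EReal) < rH := calc
    (((1/2) * (E - k) : ℝ) : EReal) < ((E - k : ℝ) : EReal) := by
      exact_mod_cast (by linarith : (1/2) * (E - k) < E - k)
    _ = (E : EReal) - k := EReal.coe_sub E k
    _ ≤ rH := hrH ▸ EReal.sub_le_sub (coe_integral_le_essSup hint) le_rfl
  exact ⟨(1/2) * (E - k), ⟨by linarith, hlt⟩, hfix,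
    fun r _ _ hr => hdmrl.eq_of_eq_apply_add hr hfix, by rw [hk]⟩

/-- Under DMRL, if `r_L = α_L − k > 0` and `E(α) − α_L ≤ r_L`, then the
unique solution `r* ∈ (0, r_H)` of `r = m(k + r)` is `r* = (1/2)(E(α) − 3T − c)`. -/
theorem stmt11 (μ : Measure ℝ) [IsProbabilityMeasure μ]
    (hnonneg : μ (Iio 0) = 0) (hint : Integrable id μ) (hcont : ∀ t : ℝ, μ {t} = 0)
    (hdmrl : Antitone (mrl μ))
    (T c : ℝ) (hT : 0 ≤ T) (hc : 0 ≤ c) (k : ℝ) (hk : k = 3*T + c)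
    (αL : ℝ) (hαL : essInf (fun x : ℝ => (x : EReal)) μ = (αL : EReal))
    (rH : EReal) (hrH : rH = essSup (fun x : ℝ => (x : EReal)) μ - (k : EReal))
    (hrHpos : 0 < rH)
    (hrLpos : 0 < αL - k)
    (hcond : (∫ x, x ∂μ) - αL ≤ αL - k) :
    ∃ rstar : ℝ, (0 < rstar ∧ (rstar : EReal) < rH) ∧ rstar = mrl μ (k + rstar) ∧
      (∀ r : ℝ, 0 < r → (r : EReal) < rH → r = mrl μ (k + r) → r = rstar) ∧
      rstar = (1/2) * ((∫ x, x ∂μ) - (3*T + c)) :=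
  stmt11_general μ hint hcont hdmrl T c k hk αL hαL rH hrH hrLpos hcond
end

section
/- Let α be a nonnegative random variable with finite expectation and continuous CDF F which is DMRL, let T ≥ 0, c ≥ 0, k = 3T + c, r_L = α_L − k, r_H = α_H − k, and assume r_H > 0. If E(α) − α_L > α_L − 3T − c (= r_L), then the unique solution r* ∈ (0, r_H) of the fixed point equation r = m(k + r) satisfies r* > max{r_L, 0}, i.e. r* ∈ (r_L⁺, r_H). -/
/-!
Under DMRL the map `r ↦ m(k + r) - r` is strictly decreasing, which gives uniqueness. Without
atoms it is continuous as long as `P(α > k + r) > 0`; it is positive at `r = 0` and negative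
somewhere below `r_H` (by monotonicity if `α` is unbounded, and because `m(t) ≤ α_H - t`
otherwise), so the intermediate value theorem produces `r*`. Finally
`m(α_L) = E(α) - α_L > α_L - k`, so `r* ≤ α_L - k` would give
`r* = m(k + r*) ≥ m(α_L) > α_L - k ≥ r*`.
-/

open MeasureTheory Set Filter ProbabilityTheory

variable {μ : Measure ℝ}

lemma continuous_cdf [IsProbabilityMeasure μ] [NullSingletonClass μ] : Continuous (cdf μ) := by
  refine continuous_iff_continuousAt.2 fun x => ?_
  rw [(cdf μ).mono.continuousAt_iff_leftLim_eq_rightLim, (cdf μ).rightLim_eq]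
  have hjump := (cdf μ).measure_singleton x
  rw [measure_cdf, measure_singleton, eq_comm, ENNReal.ofReal_eq_zero] at hjump
  linarith [(cdf μ).mono.leftLim_le (le_refl x)]

lemma continuous_measure_Ioi_toReal [IsProbabilityMeasure μ] [NullSingletonClass μ] :
    Continuous fun t => (μ (Ioi t)).toReal := by
  have htail : (fun t => (μ (Ioi t)).toReal) = fun t => 1 - cdf μ t := by
    ext t
    rw [cdf_eq_real, measureReal_def, ← compl_Iic, prob_compl_eq_one_sub measurableSet_Iic,
      ENNReal.toReal_sub_of_le prob_le_one ENNReal.one_ne_top, ENNReal.toReal_one]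
  rw [htail]
  exact continuous_const.sub continuous_cdf

lemma integrable_max_sub_zero [IsFiniteMeasure μ] (hint : Integrable id μ) (t : ℝ) :
    Integrable (fun x => max (x - t) 0) μ :=
  (hint.sub (integrable_const t)).pos_part

lemma lipschitzWith_integral_max_sub_zero [IsProbabilityMeasure μ] (hint : Integrable id μ) :
    LipschitzWith 1 fun t => ∫ x, max (x - t) 0 ∂μ := by
  refine LipschitzWith.of_dist_le_mul fun s t => ?_
  rw [Real.dist_eq, Real.dist_eq, NNReal.coe_one, one_mul,
    ← integral_sub (integrable_max_sub_zero hint s) (integrable_max_sub_zero hint t)]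
  calc |∫ x, (max (x - s) 0 - max (x - t) 0) ∂μ|
      ≤ ∫ x, |max (x - s) 0 - max (x - t) 0| ∂μ := abs_integral_le_integral_abs
    _ ≤ ∫ _, |s - t| ∂μ := by
        refine integral_mono
          ((integrable_max_sub_zero hint s).sub (integrable_max_sub_zero hint t)).abs
          (integrable_const _) fun x => ?_
        simpa [abs_sub_comm s t] using abs_max_sub_max_le_abs (x - s) (x - t) 0
    _ = |s - t| := by simp

lemma integral_max_sub_zero_pos [IsFiniteMeasure μ] (hint : Integrable id μ) {t : ℝ}
    (ht : 0 < μ (Ioi t)) : 0 < ∫ x, max (x - t) 0 ∂μ := by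
  have hsupp : Function.support (fun x => max (x - t) 0) = Ioi t := by
    ext x
    simp
  rwa [integral_pos_iff_support_of_nonneg (f := fun x => max (x - t) 0)
    (fun x => le_max_right _ _) (integrable_max_sub_zero hint t), hsupp]

lemma measure_Ioi_pos_of_coe_lt_essSup {t : ℝ}
    (ht : (t : EReal) < essSup (fun x : ℝ => (x : EReal)) μ) : 0 < μ (Ioi t) := by
  refine pos_iff_ne_zero.2 fun h0 => ht.not_ge (essSup_le_of_ae_le _ ?_)
  rw [EventuallyLE, ae_iff]
  simpa [← Ioi_def] using h0

lemma mrl_pos [IsFiniteMeasure μ] (hint : Integrable id μ) {t : ℝ} (ht : 0 < μ (Ioi t)) :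
    0 < mrl μ t :=
  div_pos (integral_max_sub_zero_pos hint ht) (ENNReal.toReal_pos ht.ne' (measure_ne_top μ _))

lemma continuousAt_mrl [IsProbabilityMeasure μ] [NullSingletonClass μ] (hint : Integrable id μ)
    {t : ℝ} (ht : 0 < μ (Ioi t)) : ContinuousAt (mrl μ) t :=
  (lipschitzWith_integral_max_sub_zero hint).continuous.continuousAt.div
    continuous_measure_Ioi_toReal.continuousAt (ENNReal.toReal_pos ht.ne' (measure_ne_top μ _)).ne'

lemma mrl_eq_integral_sub_of_ae_le [IsProbabilityMeasure μ] [NullSingletonClass μ]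
    (hint : Integrable id μ) {a : ℝ} (ha : ∀ᵐ x ∂μ, a ≤ x) :
    mrl μ a = (∫ x, x ∂μ) - a := by
  have hIci : μ (Ici a) = 1 := by
    rw [← measure_univ (μ := μ)]
    exact (ae_mem_iff_measure_eq measurableSet_Ici.nullMeasurableSet).1 ha
  have hN : ∫ x, max (x - a) 0 ∂μ = ∫ x, (x - a) ∂μ :=
    integral_congr_ae (ha.mono fun x hx => max_eq_left (sub_nonneg.2 hx))
  rw [mrl, hN, measure_congr Ioi_ae_eq_Ici, hIci, ENNReal.toReal_one, div_one,
    integral_sub (f := fun x => x) hint (integrable_const a)]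
  simp

lemma mrl_le_sub_of_ae_le [IsFiniteMeasure μ] (hint : Integrable id μ) {s t : ℝ}
    (hts : t ≤ s) (hs : ∀ᵐ x ∂μ, x ≤ s) : mrl μ t ≤ s - t := by
  rcases (zero_le (a := μ (Ioi t))).eq_or_lt with h0 | hpos
  · simp [mrl, ← h0, sub_nonneg.2 hts]
  have hD : 0 < (μ (Ioi t)).toReal := ENNReal.toReal_pos hpos.ne' (measure_ne_top μ _)
  have hbound : ∀ᵐ x ∂μ, max (x - t) 0 ≤ (Ioi t).indicator (fun _ => s - t) x := by
    filter_upwards [hs] with x hx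
    by_cases hxt : t < x
    · rw [indicator_of_mem (mem_Ioi.2 hxt)]
      exact max_le (by linarith) (by linarith)
    · rw [indicator_of_notMem (notMem_Ioi.2 (not_lt.1 hxt))]
      exact max_le (by linarith [not_lt.1 hxt]) le_rfl
  rw [mrl, div_le_iff₀ hD]
  calc ∫ x, max (x - t) 0 ∂μ ≤ ∫ x, (Ioi t).indicator (fun _ => s - t) x ∂μ :=
        integral_mono_ae (integrable_max_sub_zero hint t)
          ((integrable_const (s - t)).indicator measurableSet_Ioi) hbound
    _ = (s - t) * (μ (Ioi t)).toReal := by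
        rw [integral_indicator_const _ measurableSet_Ioi, smul_eq_mul, mul_comm, measureReal_def]

lemma exists_mrl_add_lt [IsFiniteMeasure μ] (hint : Integrable id μ) (hdmrl : Antitone (mrl μ))
    {k : ℝ} (hk : (k : EReal) < essSup (fun x : ℝ => (x : EReal)) μ) :
    ∃ r : ℝ, 0 < r ∧ ((k + r : ℝ) : EReal) < essSup (fun x : ℝ => (x : EReal)) μ ∧
      mrl μ (k + r) < r := by
  have hmk : 0 < mrl μ k := mrl_pos hint (measure_Ioi_pos_of_coe_lt_essSup hk)
  have hS : ∀ᵐ x : ℝ ∂μ, (x : EReal) ≤ essSup (fun x : ℝ => (x : EReal)) μ :=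
    ae_le_essSup
  generalize essSup (fun x : ℝ => (x : EReal)) μ = S at hk hS ⊢
  induction S using EReal.rec with
  | bot => exact absurd hk not_lt_bot
  | top =>
    refine ⟨mrl μ k + 1, by linarith, EReal.coe_lt_top _, ?_⟩
    linarith [hdmrl (by linarith : k ≤ k + (mrl μ k + 1))]
  | coe s =>
    have hks : k < s := EReal.coe_lt_coe_iff.1 hk
    have hs : ∀ᵐ x ∂μ, x ≤ s := hS.mono fun x hx => EReal.coe_le_coe_iff.1 hx
    -- below `s` the residual life is at most `s - (k + r)`, less than `r` once `r > (s - k)/2`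
    refine ⟨(s - k) * (3 / 4), by nlinarith, EReal.coe_lt_coe_iff.2 (by nlinarith), ?_⟩
    linarith [mrl_le_sub_of_ae_le hint (by nlinarith : k + (s - k) * (3 / 4) ≤ s) hs]

lemma exists_pos_eq_mrl_add [IsProbabilityMeasure μ] [NullSingletonClass μ]
    (hint : Integrable id μ) (hdmrl : Antitone (mrl μ)) {k : ℝ}
    (hk : (k : EReal) < essSup (fun x : ℝ => (x : EReal)) μ) :
    ∃ r : ℝ, 0 < r ∧ ((k + r : ℝ) : EReal) < essSup (fun x : ℝ => (x : EReal)) μ ∧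
      r = mrl μ (k + r) := by
  obtain ⟨r₀, hr₀, hr₀S, hlt⟩ := exists_mrl_add_lt hint hdmrl hk
  have hmk : 0 < mrl μ k := mrl_pos hint (measure_Ioi_pos_of_coe_lt_essSup hk)
  have hcont : ContinuousOn (fun r => mrl μ (k + r) - r) (Icc 0 r₀) := by
    refine continuousOn_of_forall_continuousAt fun r hr => ?_
    have hkr : ((k + r : ℝ) : EReal) ≤ ((k + r₀ : ℝ) : EReal) :=
      EReal.coe_le_coe_iff.2 (by linarith [hr.2])
    exact ((continuousAt_mrl hint (measure_Ioi_pos_of_coe_lt_essSup (hkr.trans_lt hr₀S))).comp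
      (continuous_const_add k).continuousAt).sub continuousAt_id
  obtain ⟨r, hr, hfix⟩ :=
    intermediate_value_Icc' hr₀.le hcont
      (show (0 : ℝ) ∈ Icc _ _ from ⟨by linarith, by simp [hmk.le]⟩)
  have hfix : r = mrl μ (k + r) := (sub_eq_zero.1 hfix).symm
  have hr_pos : 0 < r := hr.1.lt_of_ne fun h => by simp [← h] at hfix; linarith
  exact ⟨r, hr_pos, (EReal.coe_le_coe_iff.2 (by linarith [hr.2])).trans_lt hr₀S, hfix⟩

lemma eq_of_antitone_of_eq_apply_add {f : ℝ → ℝ} (hf : Antitone f) {k a b : ℝ}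
    (ha : a = f (k + a)) (hb : b = f (k + b)) : a = b := by
  rcases lt_trichotomy a b with hab | hab | hab
  · linarith [hf (by linarith : k + a ≤ k + b)]
  · exact hab
  · linarith [hf (by linarith : k + b ≤ k + a)]

lemma sub_lt_of_antitone_of_eq_apply_add {f : ℝ → ℝ} (hf : Antitone f) {k a x : ℝ}
    (ha : a = f (k + a)) (hx : x - k < f x) : x - k < a := by
  by_contra! h
  linarith [hf (by linarith : k + a ≤ x)]

theorem stmt12_general (μ : Measure ℝ) [IsProbabilityMeasure μ]
    (hint : Integrable id μ) (hcont : ∀ t : ℝ, μ {t} = 0)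
    (hdmrl : Antitone (mrl μ))
    (k : ℝ)
    (αL : ℝ) (hαL : essInf (fun x : ℝ => (x : EReal)) μ = (αL : EReal))
    (rH : EReal) (hrH : rH = essSup (fun x : ℝ => (x : EReal)) μ - (k : EReal))
    (hrHpos : 0 < rH)
    (hcond : αL - k < (∫ x, x ∂μ) - αL) :
    ∃ rstar : ℝ, (0 < rstar ∧ (rstar : EReal) < rH) ∧ rstar = mrl μ (k + rstar) ∧
      (∀ r : ℝ, 0 < r → (r : EReal) < rH → r = mrl μ (k + r) → r = rstar) ∧
      max (αL - k) 0 < rstar := by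
  have : NullSingletonClass μ := ⟨hcont⟩
  have hk : (k : EReal) < essSup (fun x : ℝ => (x : EReal)) μ := EReal.sub_pos.1 (hrH ▸ hrHpos)
  obtain ⟨rstar, hpos, hlt, hfix⟩ := exists_pos_eq_mrl_add hint hdmrl hk
  have hltH : (rstar : EReal) < rH := by
    rw [hrH, EReal.lt_sub_iff_add_lt (.inl (EReal.coe_ne_bot k)) (.inl (EReal.coe_ne_top k)),
      add_comm]
    exact_mod_cast hlt
  have hαL_le : ∀ᵐ x ∂μ, αL ≤ x := by
    filter_upwards [ae_essInf_le (f := fun x : ℝ => (x : EReal)) (μ := μ)] with x hx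
    exact EReal.coe_le_coe_iff.1 (hαL ▸ hx)
  refine ⟨rstar, ⟨hpos, hltH⟩, hfix,
    fun r _ _ hr => eq_of_antitone_of_eq_apply_add hdmrl hr hfix, max_lt ?_ hpos⟩
  exact sub_lt_of_antitone_of_eq_apply_add hdmrl hfix
    (by rwa [mrl_eq_integral_sub_of_ae_le hint hαL_le])

/-- Under DMRL, if `E(α) − α_L > r_L = α_L − 3T − c`, then the unique
solution `r* ∈ (0, r_H)` of `r = m(k + r)` satisfies `r* > max{r_L, 0}`, i.e.
`r* ∈ (r_L⁺, r_H)`. -/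
theorem stmt12 (μ : Measure ℝ) [IsProbabilityMeasure μ]
    (hnonneg : μ (Iio 0) = 0) (hint : Integrable id μ) (hcont : ∀ t : ℝ, μ {t} = 0)
    (hdmrl : Antitone (mrl μ))
    (T c : ℝ) (hT : 0 ≤ T) (hc : 0 ≤ c) (k : ℝ) (hk : k = 3*T + c)
    (αL : ℝ) (hαL : essInf (fun x : ℝ => (x : EReal)) μ = (αL : EReal))
    (rH : EReal) (hrH : rH = essSup (fun x : ℝ => (x : EReal)) μ - (k : EReal))
    (hrHpos : 0 < rH)
    (hcond : αL - k < (∫ x, x ∂μ) - αL) :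
    ∃ rstar : ℝ, (0 < rstar ∧ (rstar : EReal) < rH) ∧ rstar = mrl μ (k + rstar) ∧
      (∀ r : ℝ, 0 < r → (r : EReal) < rH → r = mrl μ (k + r) → r = rstar) ∧
      max (αL - k) 0 < rstar :=
  stmt12_general μ hint hcont hdmrl k αL hαL rH hrH hrHpos hcond
end

section
/- Let α be a nonnegative random variable with finite expectation and continuous CDF F which is DMRL, and fix c ≥ 0. For each T ∈ [0, (α_H − c)/3), let r*(T) denote the unique solution in (0, α_H − 3T − c) of r = m(3T + c + r). Then T ↦ r*(T) is non-increasing on [0, (α_H − c)/3); consequently the equilibrium price w*(T) = c + r*(T) is also non-increasing in T. -/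
open MeasureTheory Set

/-- Under DMRL, the supplier's equilibrium profit margin `r*(T)` — the
unique solution in `(0, α_H − 3T − c)` of `r = m(3T + c + r)` — is non-increasing in the
capacity `T` on `[0, (α_H − c)/3)` (the condition `T < (α_H − c)/3` is encoded as
`3T + c < α_H`); consequently the equilibrium price `w*(T) = c + r*(T)` is also
non-increasing in `T`. -/
theorem stmt14 (μ : Measure ℝ) [IsProbabilityMeasure μ]
    (hnonneg : μ (Iio 0) = 0) (hint : Integrable id μ) (hcont : ∀ t : ℝ, μ {t} = 0)
    (hdmrl : Antitone (mrl μ))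
    (c : ℝ) (hc : 0 ≤ c)
    (rstar : ℝ → ℝ)
    (hrstar : ∀ T : ℝ, 0 ≤ T →
      ((3*T + c : ℝ) : EReal) < essSup (fun x : ℝ => (x : EReal)) μ →
      0 < rstar T ∧
      ((3*T + c + rstar T : ℝ) : EReal) < essSup (fun x : ℝ => (x : EReal)) μ ∧
      rstar T = mrl μ (3*T + c + rstar T)) :
    ∀ T₁ T₂ : ℝ, 0 ≤ T₁ → T₁ ≤ T₂ →
      ((3*T₂ + c : ℝ) : EReal) < essSup (fun x : ℝ => (x : EReal)) μ →
      rstar T₂ ≤ rstar T₁ ∧ c + rstar T₂ ≤ c + rstar T₁ := by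
  intro T₁ T₂ hT₁ h12 h2
  have h1 : ((3*T₁ + c : ℝ) : EReal) < essSup (fun x : ℝ => (x : EReal)) μ := by
    refine lt_of_le_of_lt ?_ h2
    exact_mod_cast (by linarith : (3*T₁ + c : ℝ) ≤ 3*T₂ + c)
  obtain ⟨_, _, heq1⟩ := hrstar T₁ hT₁ h1
  obtain ⟨_, _, heq2⟩ := hrstar T₂ (le_trans hT₁ h12) h2
  have key : rstar T₂ ≤ rstar T₁ := by
    by_contra h
    push_neg at h
    have hs : 3*T₁ + c + rstar T₁ ≤ 3*T₂ + c + rstar T₂ := by linarith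
    have := hdmrl hs
    rw [← heq1, ← heq2] at this
    linarith
  exact ⟨key, by linarith⟩
end

section
/- Let α be a nonnegative random variable with finite expectation and continuous CDF F which is DMRL, and fix T ≥ 0. For each c ∈ [0, α_H − 3T), let r*(c) denote the unique solution in (0, α_H − 3T − c) of r = m(3T + c + r). Then for all 0 ≤ c_1 < c_2 < α_H − 3T: r*(c_2) ≤ r*(c_1) (the supplier's profit margin decreases in c) while c_1 + r*(c_1) ≤ c_2 + r*(c_2) (the equilibrium price w* = c + r*(c) increases in c). -/
open MeasureTheory Set

/-- Under DMRL, as the supplier's cost `c` increases in `[0, α_H − 3T)`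
(encoded as `3T + c < α_H`), the equilibrium profit margin `r*(c)` — the unique solution
in `(0, α_H − 3T − c)` of `r = m(3T + c + r)` — is non-increasing, while the equilibrium
price `w*(c) = c + r*(c)` is non-decreasing. -/
theorem stmt15 (μ : Measure ℝ) [IsProbabilityMeasure μ]
    (hnonneg : μ (Iio 0) = 0) (hint : Integrable id μ) (hcont : ∀ t : ℝ, μ {t} = 0)
    (hdmrl : Antitone (mrl μ))
    (T : ℝ) (hT : 0 ≤ T)
    (rstar : ℝ → ℝ)
    (hrstar : ∀ c : ℝ, 0 ≤ c →
      ((3*T + c : ℝ) : EReal) < essSup (fun x : ℝ => (x : EReal)) μ →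
      0 < rstar c ∧
      ((3*T + c + rstar c : ℝ) : EReal) < essSup (fun x : ℝ => (x : EReal)) μ ∧
      rstar c = mrl μ (3*T + c + rstar c)) :
    ∀ c₁ c₂ : ℝ, 0 ≤ c₁ → c₁ < c₂ →
      ((3*T + c₂ : ℝ) : EReal) < essSup (fun x : ℝ => (x : EReal)) μ →
      rstar c₂ ≤ rstar c₁ ∧ c₁ + rstar c₁ ≤ c₂ + rstar c₂ := by
  intro c₁ c₂ hc₁ hlt h₂
  have h₁ : ((3*T + c₁ : ℝ) : EReal) < essSup (fun x : ℝ => (x : EReal)) μ := by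
    refine lt_of_lt_of_le ?_ h₂.le
    exact_mod_cast (by linarith : (3*T + c₁ : ℝ) < 3*T + c₂)
  obtain ⟨hp₁, _, he₁⟩ := hrstar c₁ hc₁ h₁
  obtain ⟨hp₂, _, he₂⟩ := hrstar c₂ (le_of_lt (lt_of_le_of_lt hc₁ hlt)) h₂
  constructor
  · by_contra h
    push_neg at h
    have : rstar c₂ ≤ rstar c₁ := by
      rw [he₁, he₂]
      exact hdmrl (by linarith)
    linarith
  · by_contra h
    push_neg at h
    have : rstar c₁ ≤ rstar c₂ := by
      rw [he₁, he₂]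
      exact hdmrl (by linarith)
    linarith
end

section
/- Let n ≥ 2 retailers have the same capacity T ≥ 0, and fix α ≥ 0 and w ≥ 0. Then the symmetric strategy profile in which each retailer i plays t_i* = T − (1/(n+1))·((n+1)T − α)⁺ and q_i* = (1/(n+1))·(α − (n+1)T − w)⁺ is a Nash equilibrium of the n-player second-stage game: for each i, (t_i*, q_i*) maximizes retailer i's payoff over his feasible strategies when all other retailers play (t*, q*). -/
open Finset

theorem sum_update_aux (n : ℕ) (hn : 1 ≤ n) (c p : ℝ × ℝ) (i : Fin n) :
    ∑ j : Fin n, ((Function.update (fun _ : Fin n => c) i p j).1 +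
      (Function.update (fun _ : Fin n => c) i p j).2)
      = (p.1 + p.2) + ((n : ℝ) - 1) * (c.1 + c.2) := by
  rw [← Finset.add_sum_erase _ _ (Finset.mem_univ i)]
  have h1 : ∀ j ∈ Finset.univ.erase i,
      ((Function.update (fun _ : Fin n => c) i p j).1 +
        (Function.update (fun _ : Fin n => c) i p j).2) = (c.1 + c.2) := by
    intro j hj
    rw [Function.update_of_ne (Finset.ne_of_mem_erase hj)]
  rw [Finset.sum_congr rfl h1, Finset.sum_const, Finset.card_erase_of_mem (Finset.mem_univ i)]
  simp only [Function.update_self, Finset.card_univ, Fintype.card_fin, nsmul_eq_mul]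
  have : ((n - 1 : ℕ) : ℝ) = (n : ℝ) - 1 := by
    have := Nat.cast_sub hn (R := ℝ); simpa using this
  rw [this]

/-- With `n ≥ 2` identical retailers of capacity `T`, the symmetric profile
`t* = T − (1/(n+1))((n+1)T − α)⁺`, `q* = (1/(n+1))(α − (n+1)T − w)⁺` is a Nash
equilibrium of the `n`-player second-stage game. -/
theorem stmt18 (n : ℕ) (hn : 2 ≤ n) (T α w : ℝ) (hT : 0 ≤ T) (hα : 0 ≤ α) (hw : 0 ≤ w)
    (u : Fin n → (Fin n → ℝ × ℝ) → ℝ)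
    (hu : ∀ (i : Fin n) (s : Fin n → ℝ × ℝ),
      u i s = ((s i).1 + (s i).2) * (α - ∑ j : Fin n, ((s j).1 + (s j).2)) - w * (s i).2)
    (star : ℝ × ℝ)
    (hstar : star = (T - (1/(n + 1 : ℝ)) * max ((n + 1 : ℝ)*T - α) 0,
                     (1/(n + 1 : ℝ)) * max (α - (n + 1 : ℝ)*T - w) 0)) :
    (0 ≤ star.1 ∧ star.1 ≤ T ∧ 0 ≤ star.2) ∧
    (∑ _j : Fin n, (star.1 + star.2)) ≤ α ∧
    (∀ (i : Fin n) (p : ℝ × ℝ), 0 ≤ p.1 → p.1 ≤ T → 0 ≤ p.2 →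
      (∑ j : Fin n, ((Function.update (fun _ : Fin n => star) i p j).1 +
        (Function.update (fun _ : Fin n => star) i p j).2)) ≤ α →
      u i (Function.update (fun _ : Fin n => star) i p) ≤ u i (fun _ : Fin n => star)) := by
  have hN : (2:ℝ) ≤ (n:ℝ) := by exact_mod_cast hn
  have hn1 : (0:ℝ) < (n:ℝ) + 1 := by positivity
  have hne : ((n:ℝ) + 1) ≠ 0 := ne_of_gt hn1
  have hsumc : (∑ _j : Fin n, (star.1 + star.2)) = (n:ℝ) * (star.1 + star.2) := by
    rw [Finset.sum_const, Finset.card_univ, Fintype.card_fin, nsmul_eq_mul]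
  have hsumu := sum_update_aux n (le_trans (by norm_num) hn) star
  rcases le_or_gt ((n + 1 : ℝ)*T - α) 0 with h1 | h1
  · rcases le_or_gt (α - (n + 1 : ℝ)*T - w) 0 with h2 | h2
    · -- star = (T, 0)
      have hs1 : star.1 = T := by rw [hstar]; simp [max_eq_right h1]
      have hs2 : star.2 = 0 := by rw [hstar]; simp [max_eq_right h2]
      refine ⟨⟨by rw [hs1]; exact hT, le_of_eq hs1, le_of_eq hs2.symm⟩, ?_, ?_⟩
      · rw [hsumc, hs1, hs2]; nlinarith
      · intro i p hp1 hp2 hp3 hfeas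
        simp only [hu, Function.update_self, hsumu, hsumc]
        rw [hs1, hs2]
        nlinarith [mul_nonneg hw hp3, mul_nonneg hw (sub_nonneg.2 hp2),
          sq_nonneg (p.1 + p.2 - T)]
    · -- star = (T, (α - (n+1)T - w)/(n+1))
      have hs1 : star.1 = T := by rw [hstar]; simp [max_eq_right h1]
      have hs2 : star.2 = (1/((n:ℝ) + 1)) * (α - ((n:ℝ) + 1)*T - w) := by
        rw [hstar]; simp [max_eq_left (le_of_lt h2)]
      have hq : 0 ≤ star.2 := by
        rw [hs2]; exact mul_nonneg (by positivity) (le_of_lt h2)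
      refine ⟨⟨by rw [hs1]; exact hT, le_of_eq hs1, hq⟩, ?_, ?_⟩
      · rw [hsumc, hs1, hs2]
        rw [← sub_nonneg]
        have : α - (n:ℝ) * (T + 1/((n:ℝ) + 1) * (α - ((n:ℝ) + 1)*T - w))
            = (α + (n:ℝ)*w) / ((n:ℝ)+1) := by field_simp; ring
        rw [this]
        positivity
      · intro i p hp1 hp2 hp3 hfeas
        simp only [hu, Function.update_self, hsumu, hsumc]
        rw [hs1, hs2, ← sub_nonneg]
        have key : (T + 1 / ((n:ℝ) + 1) * (α - ((n:ℝ) + 1) * T - w)) *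
              (α - (n:ℝ) * (T + 1 / ((n:ℝ) + 1) * (α - ((n:ℝ) + 1) * T - w))) -
              w * (1 / ((n:ℝ) + 1) * (α - ((n:ℝ) + 1) * T - w)) -
            ((p.1 + p.2) * (α - (p.1 + p.2 + ((n:ℝ) - 1) *
              (T + 1 / ((n:ℝ) + 1) * (α - ((n:ℝ) + 1) * T - w)))) - w * p.2)
            = (((n:ℝ)+1)*(p.1 + p.2) - (α - w))^2 / ((n:ℝ)+1)^2 + w * (T - p.1) := by
          field_simp; ring
        rw [key]
        have := mul_nonneg hw (sub_nonneg.2 hp2)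
        positivity
  · -- star = (α/(n+1), 0)
    have h2 : α - (n + 1 : ℝ)*T - w ≤ 0 := by nlinarith
    have hs1 : star.1 = (1/((n:ℝ) + 1)) * α := by
      rw [hstar]
      show T - 1 / ((n:ℝ) + 1) * max (((n:ℝ) + 1) * T - α) 0 = _
      rw [max_eq_left (le_of_lt h1)]; field_simp; ring
    have hs2 : star.2 = 0 := by rw [hstar]; simp [max_eq_right h2]
    have hq : 0 ≤ star.1 := by rw [hs1]; positivity
    have hqT : star.1 ≤ T := by
      rw [hs1, div_mul_eq_mul_div, one_mul, div_le_iff₀ hn1]; nlinarith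
    refine ⟨⟨hq, hqT, le_of_eq hs2.symm⟩, ?_, ?_⟩
    · rw [hsumc, hs1, hs2]
      rw [← sub_nonneg]
      have : α - (n:ℝ) * (1/((n:ℝ) + 1) * α + 0) = α / ((n:ℝ)+1) := by field_simp; ring
      rw [this]; positivity
    · intro i p hp1 hp2 hp3 hfeas
      simp only [hu, Function.update_self, hsumu, hsumc]
      rw [hs1, hs2, ← sub_nonneg]
      have key : (1 / ((n:ℝ) + 1) * α + 0) * (α - (n:ℝ) * (1 / ((n:ℝ) + 1) * α + 0)) - w * 0 -
            ((p.1 + p.2) * (α - (p.1 + p.2 + ((n:ℝ) - 1) * (1 / ((n:ℝ) + 1) * α + 0))) - w * p.2)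
          = (((n:ℝ)+1)*(p.1 + p.2) - α)^2 / ((n:ℝ)+1)^2 + w * p.2 := by
        field_simp; ring
      rw [key]
      have := mul_nonneg hw hp3
      positivity
end
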